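/- For every unit vector v = (v₁,v₂,v₃,v₄) ∈ ℂ⁴ (i.e. |v₁|²+|v₂|²+|v₃|²+|v₄|² = 1), there exists h ∈ Sp2 such that h_{i2} = vᵢ for i = 1,2,3,4. -/

import Mathlib

/-
Sp(2) is the quaternionic unitary group of ℍ² ≅ ℂ⁴, so it acts transitively on unit vectors.
Concretely, once column 1 is `v`, the quaternionic structure forces column 3 to be
`(-v̄₂, -v̄₃, v̄₀, v̄₁)`, and it remains to complete these two columns to an orthonormal basis
compatibly with that structure. For `r = √(|v₀|² + |v₂|²) ≠ 0` an explicit completion is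
`(-(v₀v̄₁ + v̄₂v₃)/r, r, (v̄₀v₃ - v̄₁v₂)/r, 0)`; if `v₀ = v₂ = 0` a rotation of the plane spanned by
the second and fourth basis vectors suffices. The case split cannot be avoided by a continuous
formula, because the principal Sp(1)-bundle Sp(2) → S⁷ is nontrivial.
-/

open Finset

noncomputable section

/-- SU(5): 5×5 special unitary complex matrices. -/
def SU5 : Set (Matrix (Fin 5) (Fin 5) ℂ) :=
  {A | A * A.conjTranspose = 1 ∧ A.det = 1}

/-- The image of the embedding Sp(2) ↪ SU(5). -/
def Sp2 : Set (Matrix (Fin 5) (Fin 5) ℂ) :=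
  {h | h ∈ SU5 ∧
    (∀ i : Fin 5, h i 4 = if i = 4 then 1 else 0) ∧
    (∀ i : Fin 5, h 4 i = if i = 4 then 1 else 0) ∧
    (∀ i j : Fin 5, i < 2 → j < 2 →
      h (i + 2) (j + 2) = (starRingEnd ℂ) (h i j) ∧
      h (i + 2) j = -(starRingEnd ℂ) (h i (j + 2)))}

open ComplexConjugate

lemma Complex.mul_conj_add_mul_conj (a b : ℂ) :
    a * conj a + b * conj b = ((‖a‖ ^ 2 + ‖b‖ ^ 2 : ℝ) : ℂ) := by
  push_cast
  rw [Complex.mul_conj', Complex.mul_conj']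

def sp2Rotation (b d : ℂ) : Matrix (Fin 5) (Fin 5) ℂ :=
  !![1, 0, 0, 0, 0;
     0, b, 0, -conj d, 0;
     0, 0, 1, 0, 0;
     0, d, 0, conj b, 0;
     0, 0, 0, 0, 1]

/- When `r² = ‖a‖² + ‖c‖²`, column 0 is a unit vector orthogonal to columns 1 and 3; `r` is taken
real because the quaternionic structure makes the entry `(3, 2)` the conjugate of `(1, 0)`. -/
def sp2Completion (a b c d : ℂ) (r : ℝ) : Matrix (Fin 5) (Fin 5) ℂ :=
  !![-(a * conj b + conj c * d) / r, a, (b * conj c - a * conj d) / r, -conj c, 0;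
     r, b, 0, -conj d, 0;
     (conj a * d - conj b * c) / r, c, -(conj a * b + c * conj d) / r, conj a, 0;
     0, d, r, conj b, 0;
     0, 0, 0, 0, 1]

lemma sp2Rotation_mem {b d : ℂ} (h : ‖b‖ ^ 2 + ‖d‖ ^ 2 = 1) : sp2Rotation b d ∈ Sp2 := by
  have hbd : b * conj b + d * conj d = 1 := by
    rw [Complex.mul_conj_add_mul_conj, h, Complex.ofReal_one]
  refine ⟨⟨?_, ?_⟩, ?_, ?_, ?_⟩
  · ext i j
    fin_cases i <;> fin_cases j <;>
      simp [sp2Rotation, Matrix.mul_apply, Fin.sum_univ_five] <;>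
      first | ring1 | linear_combination hbd
  · simp [sp2Rotation, Matrix.det_succ_row_zero, Fin.sum_univ_succ, Fin.succAbove]
    linear_combination hbd
  · intro i; fin_cases i <;> rfl
  · intro i; fin_cases i <;> rfl
  · intro i j hi hj
    fin_cases i <;> fin_cases j <;> simp_all [sp2Rotation]

lemma sp2Completion_mem {a b c d : ℂ} {r : ℝ} (hr : r ≠ 0)
    (hac : ‖a‖ ^ 2 + ‖c‖ ^ 2 = r ^ 2) (hbd : ‖b‖ ^ 2 + ‖d‖ ^ 2 = 1 - r ^ 2) :
    sp2Completion a b c d r ∈ Sp2 := by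
  have hr' : (r : ℂ) ≠ 0 := Complex.ofReal_ne_zero.mpr hr
  have hac' : a * conj a + c * conj c = (r : ℂ) ^ 2 := by
    rw [Complex.mul_conj_add_mul_conj, hac, Complex.ofReal_pow]
  have hbd' : b * conj b + d * conj d = 1 - (r : ℂ) ^ 2 := by
    rw [Complex.mul_conj_add_mul_conj, hbd]; push_cast; ring
  refine ⟨⟨?_, ?_⟩, ?_, ?_, ?_⟩
  · ext i j
    fin_cases i <;> fin_cases j <;>
      simp [sp2Completion, Matrix.mul_apply, Fin.sum_univ_five]
    all_goals try field_simp
    all_goals first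
      | ring1
      | linear_combination hbd'
      | linear_combination (b * conj b + d * conj d + (r : ℂ) ^ 2) * hac' + ((r : ℂ) ^ 2) * hbd'
  · simp [sp2Completion, Matrix.det_succ_row_zero, Fin.sum_univ_succ, Fin.succAbove]
    field_simp
    linear_combination
      ((a * conj a + c * conj c) * (b * conj b + d * conj d + (r : ℂ) ^ 2 + 1)) * hbd' + hac'
  · intro i; fin_cases i <;> rfl
  · intro i; fin_cases i <;> rfl
  · intro i j hi hj
    fin_cases i <;> fin_cases j <;> simp_all [sp2Completion]
    all_goals ring

theorem stmt3 (v : Fin 4 → ℂ) (hv : ∑ i, ‖v i‖ ^ 2 = 1) :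
    ∃ h ∈ Sp2, ∀ i : Fin 4, h i.castSucc 1 = v i := by
  rw [Fin.sum_univ_four] at hv
  by_cases h02 : v 0 = 0 ∧ v 2 = 0
  · refine ⟨sp2Rotation (v 1) (v 3), sp2Rotation_mem ?_, ?_⟩
    · simpa [h02] using hv
    · intro i
      fin_cases i <;> simp [sp2Rotation, h02]
  · set r := √(‖v 0‖ ^ 2 + ‖v 2‖ ^ 2)
    have hr : r ≠ 0 := by
      rw [Ne, Real.sqrt_eq_zero (by positivity)]
      contrapose! h02
      obtain ⟨h0, h2⟩ := (add_eq_zero_iff_of_nonneg (by positivity) (by positivity)).mp h02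
      exact ⟨by simpa using h0, by simpa using h2⟩
    have hac : ‖v 0‖ ^ 2 + ‖v 2‖ ^ 2 = r ^ 2 := (Real.sq_sqrt (by positivity)).symm
    refine ⟨sp2Completion (v 0) (v 1) (v 2) (v 3) r, sp2Completion_mem hr hac (by linarith), ?_⟩
    intro i
    fin_cases i <;> simp [sp2Completion]
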